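/- arXiv:2011.14690 — 5 statements merged into one kernel-verified Lean document; each statement's English description precedes it below -/
import Mathlib

section
/- Let t be an even positive integer. The t×t matrix P(t) with entries P_{i,j} = (−1)^{i+j} if i ≤ j and P_{i,j} = (−1)^{i+j+1} if i > j is nonsingular over ℝ. -/
def Pmat (t : ℕ) : Matrix (Fin t) (Fin t) ℝ :=
  Matrix.of fun i j =>
    if (i : ℕ) ≤ (j : ℕ) then (-1 : ℝ) ^ ((i : ℕ) + (j : ℕ))
    else (-1 : ℝ) ^ ((i : ℕ) + (j : ℕ) + 1)

/-! Adding row i+1 of P(t) to row i gives 2·e_i, so a kernel vector of P(t) vanishes in every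
coordinate except possibly the last one; the last row then reads P_{t-1,t-1} v_{t-1} = v_{t-1} = 0. -/

lemma Pmat_apply_self {t : ℕ} (i : Fin t) : Pmat t i i = 1 := by
  simp [Pmat, ← two_mul]

lemma Pmat_apply_add_Pmat_apply_succ {t : ℕ} (i j : Fin t) (h : (i : ℕ) + 1 < t) :
    Pmat t i j + Pmat t ⟨i + 1, h⟩ j = if j = i then 2 else 0 := by
  simp only [Pmat, Matrix.of_apply, Fin.ext_iff]
  rcases lt_trichotomy (j : ℕ) i with hji | hji | hji
  · rw [if_neg (by omega), if_neg (by omega), if_neg (by omega), pow_succ, pow_succ,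
      show (i : ℕ) + 1 + j = i + j + 1 by ring, pow_succ]
    ring
  · rw [if_pos (by omega), if_neg (by omega), if_pos hji, hji, ← two_mul,
      show (i : ℕ) + 1 + i + 1 = 2 * (i + 1) by ring, pow_mul, pow_mul]
    norm_num
  · rw [if_pos (by omega), if_pos (by omega), if_neg (by omega),
      show (i : ℕ) + 1 + j = i + j + 1 by ring, pow_succ]
    ring

lemma Pmat_mulVec_eq_zero {t : ℕ} {v : Fin t → ℝ} (hv : (Pmat t).mulVec v = 0) : v = 0 := by
  have hrow : ∀ i, ∑ j, Pmat t i j * v j = 0 := fun i => congrFun hv i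
  have hlt : ∀ i : Fin t, (i : ℕ) + 1 < t → v i = 0 := by
    intro i h
    have hsum := congrArg₂ (· + ·) (hrow i) (hrow ⟨i + 1, h⟩)
    simp only [← Finset.sum_add_distrib, ← add_mul, Pmat_apply_add_Pmat_apply_succ i _ h,
      ite_mul, zero_mul, Finset.sum_ite_eq', Finset.mem_univ, if_true, add_zero] at hsum
    linarith
  funext i
  by_cases h : (i : ℕ) + 1 < t
  · exact hlt i h
  · have hdiag := hrow i
    rwa [Finset.sum_eq_single i (fun j _ hji => by
        rw [hlt j (by have := Fin.val_ne_of_ne hji; omega), mul_zero]) (by simp),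
      Pmat_apply_self, one_mul] at hdiag

theorem stmt_2_general (t : ℕ) :
    (Pmat t).det ≠ 0 := by
  rw [Ne, ← Matrix.exists_mulVec_eq_zero_iff]
  rintro ⟨v, hv, hPv⟩
  exact hv (Pmat_mulVec_eq_zero hPv)

theorem stmt_2 (t : ℕ) (ht : 0 < t) (hev : Even t) :
    (Pmat t).det ≠ 0 :=
  stmt_2_general t
end

section
/- Let t ≥ 4 be even, and let D^0, D^1, …, D^{2t−1} ∈ {1,−1}^t be the vertex sequence of a symmetric cycle in the hypercube graph H(t,2), i.e., consecutive vertices (indices mod 2t) differ in exactly one coordinate and D^{k+t} = −D^k for 0 ≤ k ≤ t−1. Define the subtopes S^k := (1/2)(D^k + D^{k+1}) for 0 ≤ k ≤ t−1. Then (S^0, S^1, …, S^{t−1}) is a basis of ℝ^t. -/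
/-!
Along the first half `D⁰, …, Dᵗ` of the cycle every coordinate changes sign (as `Dᵗ = -D⁰`), while
only `t` coordinate changes happen in total; so each coordinate `i` changes at exactly one step `j`.
In that coordinate `Sᵏ_i = D⁰_i` for `k < j`, `Sʲ_i = 0` and `Sᵏ_i = -D⁰_i` for `k > j`. Hence a
relation `∑ gₖ Sᵏ = 0` says, with partial sums `Aⱼ = ∑_{k<j} gₖ`, that `Aⱼ + Aⱼ₊₁ = Aₜ` for all
`j < t`. Starting from `A₀ = 0` this gives `A_{2m} = 0`, so `Aₜ = 0` as `t` is even, and then all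
`Aⱼ` and all `gₖ` vanish.
-/

open Finset

theorem Nat.exists_ne_add_one_of_ne {α : Type*} {f : ℕ → α} {a b : ℕ} (hab : a ≤ b)
    (h : f a ≠ f b) : ∃ m, a ≤ m ∧ m < b ∧ f m ≠ f (m + 1) := by
  by_contra! hflat
  suffices ∀ m, a ≤ m → m ≤ b → f a = f m from h (this b hab le_rfl)
  intro m ham
  induction m, ham using Nat.le_induction with
  | base => intro; rfl
  | succ m ham ih => intro hmb; rw [ih (by omega), hflat m ham (by omega)]

section FlipSteps

variable {ι α : Type*} [DecidableEq α] (D : ℕ → ι → α)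

def flipSteps (n : ℕ) (i : ι) : Finset ℕ :=
  {k ∈ range n | D k i ≠ D (k + 1) i}

theorem sum_card_flipSteps [Fintype ι] {n : ℕ} (hstep : ∀ k < n, #{i | D k i ≠ D (k + 1) i} = 1) :
    ∑ i, #(flipSteps D n i) = n := by
  simp_rw [flipSteps, card_filter]
  rw [sum_comm]
  simp_rw [← card_filter]
  rw [sum_congr rfl fun k hk => hstep k (mem_range.mp hk)]
  simp

theorem card_flipSteps_eq_one [Fintype ι] {n : ℕ} (hcard : Fintype.card ι = n)
    (hstep : ∀ k < n, #{i | D k i ≠ D (k + 1) i} = 1)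
    (hflip : ∀ i, (flipSteps D n i).Nonempty) (i : ι) :
    #(flipSteps D n i) = 1 := by
  have hsum : ∑ _i : ι, 1 = ∑ i, #(flipSteps D n i) := by
    rw [sum_card_flipSteps D hstep, ← hcard, Fintype.card_eq_sum_ones]
  exact ((sum_eq_sum_iff_of_le fun i _ => (hflip i).card_pos).mp hsum i (mem_univ i)).symm

theorem flipSteps_nonempty_of_ne {n : ℕ} {i : ι} (h : D 0 i ≠ D n i) :
    (flipSteps D n i).Nonempty := by
  obtain ⟨m, -, hmn, hm⟩ := Nat.exists_ne_add_one_of_ne (f := fun k => D k i) n.zero_le h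
  exact ⟨m, mem_filter.mpr ⟨mem_range.mpr hmn, hm⟩⟩

theorem eq_of_flipSteps_eq_singleton {n j : ℕ} {i : ι} (h : flipSteps D n i = {j}) :
    (∀ k ≤ j, D k i = D 0 i) ∧ ∀ k, j < k → k ≤ n → D k i = D n i := by
  have hflip : ∀ m, m < n → D m i ≠ D (m + 1) i → m = j := fun m hmn hm =>
    mem_singleton.mp (h ▸ mem_filter.mpr ⟨mem_range.mpr hmn, hm⟩)
  have hjn : j < n := mem_range.mp (mem_filter.mp (h ▸ mem_singleton_self j)).1
  constructor
  · intro k hkj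
    by_contra hne
    obtain ⟨m, -, hmk, hm⟩ := Nat.exists_ne_add_one_of_ne (f := fun k => D k i) k.zero_le (Ne.symm hne)
    exact absurd (hflip m (by omega) hm) (by omega)
  · intro k hjk hkn
    by_contra hne
    obtain ⟨m, hkm, hmn, hm⟩ := Nat.exists_ne_add_one_of_ne (f := fun k => D k i) hkn hne
    exact absurd (hflip m hmn hm) (by omega)

end FlipSteps

theorem eq_zero_of_sum_range_eq_sum_Ico {M : Type*} [AddCommGroup M] {t : ℕ} (ht : Even t)
    (c : ℕ → M) (h : ∀ j < t, ∑ k ∈ range j, c k = ∑ k ∈ Ico (j + 1) t, c k) :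
    ∀ k < t, c k = 0 := by
  set A : ℕ → M := fun n => ∑ k ∈ range n, c k with hA
  have key : ∀ j < t, A j + A (j + 1) = A t := fun j hj => by
    show ∑ k ∈ range j, c k + ∑ k ∈ range (j + 1), c k = ∑ k ∈ range t, c k
    rw [h j hj, add_comm]
    exact sum_range_add_sum_Ico c (by omega)
  have hAeven : ∀ m, m + m ≤ t → A (m + m) = 0 := by
    intro m
    induction m with
    | zero => intro; simp [hA]
    | succ m ih =>
      intro hm
      have h₁ := key (m + m) (by omega)
      have h₂ := key (m + m + 1) (by omega)
      rw [show m + 1 + (m + 1) = m + m + 1 + 1 by omega, ← ih (by omega)]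
      exact add_left_cancel (h₂.trans (h₁.symm.trans (add_comm _ _)))
  have hAt : A t = 0 := by
    obtain ⟨m, rfl⟩ := ht
    exact hAeven m le_rfl
  have hAzero : ∀ n ≤ t, A n = 0 := by
    intro n
    induction n with
    | zero => intro; simp [hA]
    | succ n ih =>
      intro hn
      simpa [ih (by omega), hAt] using key n (by omega)
  intro k hk
  have h₀ := hAzero k hk.le
  have h₁ := hAzero (k + 1) hk
  simp only [hA, sum_range_succ] at h₀ h₁
  rwa [h₀, zero_add] at h₁

theorem sum_mul_midpoint_of_flip_at (c x : ℕ → ℝ) (a : ℝ) {j n : ℕ} (hjn : j < n)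
    (hle : ∀ k ≤ j, x k = a) (hgt : ∀ k, j < k → k ≤ n → x k = -a) :
    ∑ k ∈ range n, c k * ((x k + x (k + 1)) / 2) =
      a * (∑ k ∈ range j, c k - ∑ k ∈ Ico (j + 1) n, c k) := by
  have hbefore : ∑ k ∈ range j, c k * ((x k + x (k + 1)) / 2) = a * ∑ k ∈ range j, c k := by
    rw [mul_sum]
    refine sum_congr rfl fun k hk => ?_
    have hkj := mem_range.mp hk
    rw [hle k hkj.le, hle (k + 1) hkj]
    ring
  have hafter : ∑ k ∈ Ico (j + 1) n, c k * ((x k + x (k + 1)) / 2) =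
      -(a * ∑ k ∈ Ico (j + 1) n, c k) := by
    rw [mul_sum, ← sum_neg_distrib]
    refine sum_congr rfl fun k hk => ?_
    have hk' := mem_Ico.mp hk
    rw [hgt k (by omega) (by omega), hgt (k + 1) (by omega) (by omega)]
    ring
  rw [← sum_range_add_sum_Ico _ hjn, sum_range_succ, hbefore, hafter, hle j le_rfl,
    hgt (j + 1) (by omega) hjn]
  ring

theorem linearIndependent_midpoints_of_flip_at {ι : Type*} {t : ℕ} (ht : Even t)
    (D : ℕ → ι → ℝ)
    (hflip : ∀ j < t, ∃ i, D 0 i ≠ 0 ∧ (∀ k ≤ j, D k i = D 0 i) ∧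
      ∀ k, j < k → k ≤ t → D k i = -D 0 i) :
    LinearIndependent ℝ (fun k : Fin t => fun i => (D (k : ℕ) i + D ((k : ℕ) + 1) i) / 2) := by
  rw [Fintype.linearIndependent_iff]
  intro g hg
  set c : ℕ → ℝ := fun k => if h : k < t then g ⟨k, h⟩ else 0 with hc
  have hgc : ∀ k : Fin t, g k = c k := fun k => by simp [hc, k.isLt]
  have hrel : ∀ j < t, ∑ k ∈ range j, c k = ∑ k ∈ Ico (j + 1) t, c k := by
    intro j hj
    obtain ⟨i, hi0, hle, hgt⟩ := hflip j hj
    have hcoord := congrFun hg i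
    simp only [Finset.sum_apply, Pi.smul_apply, smul_eq_mul, hgc, Pi.zero_apply] at hcoord
    rw [Fin.sum_univ_eq_sum_range (fun k => c k * ((D k i + D (k + 1) i) / 2)),
      sum_mul_midpoint_of_flip_at c (fun k => D k i) _ hj hle hgt] at hcoord
    exact sub_eq_zero.mp ((mul_eq_zero.mp hcoord).resolve_left hi0)
  intro k
  rw [hgc]
  exact eq_zero_of_sum_range_eq_sum_Ico ht c hrel k k.isLt

theorem stmt_3_general (t : ℕ) (hev : Even t)
    (D : ℕ → Fin t → ℝ)
    -- every vertex of the cycle lies in {1,-1}^t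
    (hpm : ∀ k < 2 * t, ∀ i, D k i = 1 ∨ D k i = -1)
    -- consecutive vertices (cyclically) differ in exactly one coordinate
    (hadj : ∀ k < 2 * t,
      (Finset.univ.filter fun i => D k i ≠ D ((k + 1) % (2 * t)) i).card = 1)
    -- antipodal symmetry: D^{k+t} = -D^k
    (hsym : ∀ k < t, ∀ i, D (k + t) i = -(D k i)) :
    -- the subtopes S^k := (1/2)(D^k + D^{k+1}), 0 ≤ k ≤ t-1, form a basis of ℝ^t
    LinearIndependent ℝ (fun k : Fin t => fun i => (D (k : ℕ) i + D ((k : ℕ) + 1) i) / 2) ∧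
    Submodule.span ℝ
      (Set.range (fun k : Fin t => fun i => (D (k : ℕ) i + D ((k : ℕ) + 1) i) / 2)) = ⊤ := by
  have hD0 : ∀ i : Fin t, D 0 i ≠ 0 := fun i => by
    rcases hpm 0 (by have := i.pos; omega) i with h | h <;> norm_num [h]
  have hDt : ∀ i : Fin t, D t i = -D 0 i := fun i => by simpa using hsym 0 i.pos i
  have hstep : ∀ k < t, #{i | D k i ≠ D (k + 1) i} = 1 := fun k hk => by
    simpa [Nat.mod_eq_of_lt (show k + 1 < 2 * t by omega)] using hadj k (by omega)
  have hflip : ∀ i, (flipSteps D t i).Nonempty := fun i =>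
    flipSteps_nonempty_of_ne D (by rw [hDt]; exact fun h => hD0 i (by linarith))
  have hli := linearIndependent_midpoints_of_flip_at hev D fun j hj => by
    obtain ⟨i, hi⟩ := card_pos.mp (by rw [hstep j hj]; exact one_pos)
    have hj : j ∈ flipSteps D t i := mem_filter.mpr ⟨mem_range.mpr hj, (mem_filter.mp hi).2⟩
    obtain ⟨j', hj'⟩ := card_eq_one.mp (card_flipSteps_eq_one D (Fintype.card_fin t) hstep hflip i)
    obtain rfl := mem_singleton.mp (hj' ▸ hj)
    obtain ⟨hle, hgt⟩ := eq_of_flipSteps_eq_singleton D hj'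
    exact ⟨i, hD0 i, hle, fun k hjk hkt => (hgt k hjk hkt).trans (hDt i)⟩
  exact ⟨hli, hli.span_eq_top_of_card_eq_finrank' (by simp)⟩

theorem stmt_3 (t : ℕ) (ht : 4 ≤ t) (hev : Even t)
    (D : ℕ → Fin t → ℝ)
    -- every vertex of the cycle lies in {1,-1}^t
    (hpm : ∀ k < 2 * t, ∀ i, D k i = 1 ∨ D k i = -1)
    -- the 2t vertices are pairwise distinct
    (hinj : ∀ k < 2 * t, ∀ l < 2 * t, D k = D l → k = l)
    -- consecutive vertices (cyclically) differ in exactly one coordinate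
    (hadj : ∀ k < 2 * t,
      (Finset.univ.filter fun i => D k i ≠ D ((k + 1) % (2 * t)) i).card = 1)
    -- antipodal symmetry: D^{k+t} = -D^k
    (hsym : ∀ k < t, ∀ i, D (k + t) i = -(D k i)) :
    -- the subtopes S^k := (1/2)(D^k + D^{k+1}), 0 ≤ k ≤ t-1, form a basis of ℝ^t
    LinearIndependent ℝ (fun k : Fin t => fun i => (D (k : ℕ) i + D ((k : ℕ) + 1) i) / 2) ∧
    Submodule.span ℝ
      (Set.range (fun k : Fin t => fun i => (D (k : ℕ) i + D ((k : ℕ) + 1) i) / 2)) = ⊤ :=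
  stmt_3_general t hev D hpm hadj hsym
end

section
/- Let t ≥ 4 be even and let D be a symmetric cycle in the hypercube graph on {1,−1}^t, with subtopes S^0, S^1, …, S^{2t−1} defined by S^k = (1/2)(D^k + D^{k+1}) (indices mod 2t). For every vertex T ∈ {1,−1}^t there exist a subset Q̄ ⊂ {S^0,…,S^{2t−1}} of cardinality exactly t and positive odd integers λ_Q (Q ∈ Q̄), with 1 ≤ λ_Q ≤ t−1, such that T = Σ_{Q ∈ Q̄} λ_Q · Q; moreover Q̄ contains exactly one element of each antipodal pair {S^k, −S^k = S^{k+t}}, and the pair (Q̄, (λ_Q)) with these properties is unique. -/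
/-!
Along the half-cycle `D⁰, …, Dᵗ = -D⁰` each of the `t` coordinates must change sign, and each of
the `t` edges changes exactly one coordinate, so coordinate `i` changes exactly once, at an edge
`E i`, and `E` is a permutation. Hence `Sᵏᵢ = sign (E i - k) · D⁰ᵢ`, and `T = ∑ₖ cₖ Sᵏ` is the
linear system `M c = y` with `M = (sign (e - k))` and `y ∈ {±1}ᵗ`. For even `t` the matrix
`W = ((-1)^(k + j) sign (k - j))` inverts `M`, so `c = W y` is the unique solution. Each `cₖ` is a
sum of `t - 1` terms `±1`, hence odd with `|cₖ| ≤ t - 1`, and it splits uniquely as a sign times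
a positive coefficient.
-/

open Finset Matrix

lemma Int.sign_eq_ite (a : ℤ) : a.sign = if 0 < a then 1 else if a = 0 then 0 else -1 := by
  rcases lt_trichotomy a 0 with h | rfl | h
  · simp [Int.sign_eq_neg_one_of_neg h, h.not_gt, h.ne]
  · simp
  · simp [Int.sign_eq_one_of_pos h, h]

def signMatrix (t : ℕ) : Matrix (Fin t) (Fin t) ℤ :=
  of fun e k => Int.sign ((e : ℤ) - k)

def altSignMatrix (t : ℕ) : Matrix (Fin t) (Fin t) ℤ :=
  of fun k j => (-1) ^ ((k : ℕ) + j) * Int.sign ((k : ℤ) - j)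

lemma Fin.eq_zero_of_castSucc_eq_succ_of_last_add_zero {G : Type*} [AddGroup G]
    [IsAddTorsionFree G] {n : ℕ} {x : Fin (n + 1) → G}
    (hstep : ∀ e : Fin n, x e.castSucc = x e.succ) (hwrap : x (Fin.last n) + x 0 = 0) :
    x = 0 := by
  have hconst : ∀ e, x e = x 0 := fun e => by
    induction e using Fin.induction with
    | zero => rfl
    | succ e ih => rw [← hstep, ih]
  have h0 : x 0 = 0 := by
    rw [← two_nsmul_eq_zero, two_nsmul, ← hwrap, hconst (Fin.last n)]
  funext e
  rw [hconst, h0, Pi.zero_apply]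

section Rows

variable {n : ℕ}

lemma signMatrix_castSucc_sub_succ (e : Fin n) :
    signMatrix (n + 1) e.castSucc - signMatrix (n + 1) e.succ =
      -(Pi.single e.castSucc 1 + Pi.single e.succ 1) := by
  funext k
  simp only [signMatrix, of_apply, Pi.sub_apply, Pi.neg_apply, Pi.add_apply, Pi.single_apply,
    Fin.ext_iff, Fin.val_castSucc, Fin.val_succ, Int.sign_eq_ite]
  split_ifs <;> omega

lemma signMatrix_last_add_zero :
    signMatrix (n + 1) (Fin.last n) + signMatrix (n + 1) 0 =
      Pi.single 0 1 - Pi.single (Fin.last n) 1 := by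
  funext k
  simp only [signMatrix, of_apply, Pi.sub_apply, Pi.add_apply, Pi.single_apply,
    Fin.ext_iff, Fin.val_last, Fin.val_zero, Int.sign_eq_ite]
  split_ifs <;> omega

lemma altSignMatrix_castSucc_add_succ (e : Fin n) :
    altSignMatrix (n + 1) e.castSucc + altSignMatrix (n + 1) e.succ =
      Pi.single e.succ 1 - Pi.single e.castSucc 1 := by
  funext k
  simp only [altSignMatrix, of_apply, Pi.sub_apply, Pi.add_apply, Pi.single_apply,
    Fin.ext_iff, Fin.val_castSucc, Fin.val_succ]
  generalize (k : ℕ) = j, (e : ℕ) = a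
  rw [add_right_comm, pow_succ, Int.sign_eq_ite, Int.sign_eq_ite]
  split_ifs <;> first | omega | (subst_vars; ring_nf; simp [pow_mul'])

lemma altSignMatrix_zero_sub_last (hn : Odd n) :
    altSignMatrix (n + 1) 0 - altSignMatrix (n + 1) (Fin.last n) =
      Pi.single 0 1 + Pi.single (Fin.last n) 1 := by
  funext k
  simp only [altSignMatrix, of_apply, Pi.sub_apply, Pi.add_apply, Pi.single_apply,
    Fin.ext_iff, Fin.val_last, Fin.val_zero]
  have hk := k.isLt
  have hn0 := hn.pos
  generalize (k : ℕ) = j at hk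
  rw [zero_add, pow_add _ n, hn.neg_one_pow, Int.sign_eq_ite, Int.sign_eq_ite]
  split_ifs <;> first | omega | (subst_vars; simp [hn.neg_one_pow])

end Rows

theorem signMatrix_mul_altSignMatrix {t : ℕ} (ht : Even t) :
    signMatrix t * altSignMatrix t = 1 := by
  obtain _ | n := t
  · exact Subsingleton.elim _ _
  have hn : Odd n := by simpa [Nat.even_add_one] using ht
  set M := signMatrix (n + 1)
  set W := altSignMatrix (n + 1)
  have hrow : ∀ e, (M * W - 1) e = M e ᵥ* W - Pi.single e 1 := fun e => by
    funext j
    simp [mul_apply_eq_vecMul, one_eq_pi_single]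
  rw [← sub_eq_zero]
  refine Fin.eq_zero_of_castSucc_eq_succ_of_last_add_zero (fun e => ?_) ?_
  · have h := congrArg (· ᵥ* W) (signMatrix_castSucc_sub_succ e)
    simp only [sub_vecMul, neg_vecMul, add_vecMul, single_one_vecMul, row] at h
    rw [hrow, hrow]
    linear_combination h - altSignMatrix_castSucc_add_succ e
  · have h := congrArg (· ᵥ* W) signMatrix_last_add_zero
    simp only [sub_vecMul, add_vecMul, single_one_vecMul, row] at h
    rw [hrow, hrow]
    linear_combination h + altSignMatrix_zero_sub_last hn

theorem odd_and_abs_le_altSignMatrix_mulVec {t : ℕ} (ht : Even t) {y : Fin t → ℤ}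
    (hy : ∀ j, |y j| = 1) (k : Fin t) :
    Odd ((altSignMatrix t *ᵥ y) k) ∧ |(altSignMatrix t *ᵥ y) k| ≤ t - 1 := by
  set f := fun j => altSignMatrix t k j * y j
  have hf : ∀ j ∈ univ.erase k, |f j| = 1 := fun j hj => by
    have hjk : (j : ℤ) ≠ k := by simpa [Fin.ext_iff, eq_comm] using ne_of_mem_erase hj
    rcases lt_or_gt_of_ne hjk with h | h <;>
      simp [f, altSignMatrix, abs_mul, hy, Int.sign_eq_one_of_pos, Int.sign_eq_neg_one_of_neg, h]
  have hsum : (altSignMatrix t *ᵥ y) k = ∑ j ∈ univ.erase k, f j := by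
    rw [mulVec, dotProduct, ← add_sum_erase _ _ (mem_univ k)]
    simp [f, altSignMatrix]
  have hcard : ((univ.erase k).card : ℤ) = t - 1 := by
    rw [card_erase_of_mem (mem_univ k), card_univ, Fintype.card_fin, Nat.cast_sub k.pos]
    rfl
  rw [hsum]
  constructor
  · have heven : Even (∑ j ∈ univ.erase k, (f j + 1)) := even_sum _ fun j hj => by
      rcases (abs_eq zero_le_one).1 (hf j hj) with h | h <;> simp [h]
    rw [sum_add_distrib, sum_const, nsmul_one, hcard] at heven
    have hodd : Odd ((t : ℤ) - 1) := (ht.natCast (α := ℤ)).sub_odd odd_one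
    simpa using heven.sub_odd hodd
  · calc |∑ j ∈ univ.erase k, f j| ≤ ∑ j ∈ univ.erase k, |f j| := abs_sum_le_sum_abs _ _
      _ = t - 1 := by rw [sum_congr rfl hf, sum_const, nsmul_one, hcard]

lemma exists_lt_ne_succ {α : Type*} (u : ℕ → α) {n : ℕ} (h : u 0 ≠ u n) :
    ∃ k < n, u k ≠ u (k + 1) := by
  by_contra! hc
  have hconst : ∀ m ≤ n, u m = u 0 := fun m hm => by
    induction m with
    | zero => rfl
    | succ m ih => rw [← hc m (by omega), ih (by omega)]
  exact h (hconst n le_rfl).symm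

theorem exists_flipEquiv_of_antipodal_path {t : ℕ} {D : ℕ → Fin t → ℝ}
    (hpm : ∀ k ≤ t, ∀ i, D k i = 1 ∨ D k i = -1)
    (hadj : ∀ k < t, #{i | D k i ≠ D (k + 1) i} = 1) (hanti : ∀ i, D t i = -D 0 i) :
    ∃ E : Fin t ≃ Fin t, ∀ i, ∀ k ≤ t, D k i = if k ≤ E i then D 0 i else -D 0 i := by
  choose f hf using fun k : Fin t => card_eq_one.mp (hadj k k.2)
  have hflip : ∀ (k : Fin t) i, D k i ≠ D (k + 1) i ↔ f k = i := fun k i => by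
    simpa [eq_comm] using Finset.ext_iff.mp (hf k) i
  have hsurj : Function.Surjective f := fun i => by
    have h0 : D 0 i ≠ D t i := by
      rw [hanti]; rcases hpm 0 (Nat.zero_le _) i with h | h <;> rw [h] <;> norm_num
    obtain ⟨k, hk, hne⟩ := exists_lt_ne_succ (fun k => D k i) h0
    exact ⟨⟨k, hk⟩, (hflip ⟨k, hk⟩ i).1 hne⟩
  let E := (Equiv.ofBijective f ⟨Finite.injective_iff_surjective.2 hsurj, hsurj⟩).symm
  have hE : ∀ i, ∀ k < t, D k i ≠ D (k + 1) i ↔ k = E i := fun i k hk => by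
    rw [show k = (⟨k, hk⟩ : Fin t) from rfl, hflip, ← Fin.ext_iff, Equiv.eq_symm_apply]
    rfl
  refine ⟨E, fun i k hk => ?_⟩
  induction k with
  | zero => simp
  | succ k ih =>
    have hstep : D (k + 1) i = if k = E i then -D k i else D k i := by
      split_ifs with h
      · have hne := (hE i k (by omega)).2 h
        rcases hpm k (by omega) i with h1 | h1 <;> rcases hpm (k + 1) hk i with h2 | h2 <;>
          simp_all
      · exact (not_not.1 (mt (hE i k (by omega)).1 h)).symm
    rw [hstep, ih (by omega)]
    split_ifs <;> first | omega | rfl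

lemma midpoint_eq_sign_mul {f : ℕ → ℝ} {x : ℝ} {e k : ℕ}
    (hk : f k = if k ≤ e then x else -x) (hk1 : f (k + 1) = if k + 1 ≤ e then x else -x) :
    (f k + f (k + 1)) / 2 = Int.sign ((e : ℤ) - k) * x := by
  rw [hk, hk1, Int.sign_eq_ite]
  split_ifs <;> first | omega | (push_cast; ring)

lemma Int.eq_sign_and_eq_abs_of_mul_eq {a s c : ℤ} (hs : s = 1 ∨ s = -1) (ha : 0 < a)
    (h : a * s = c) : s = c.sign ∧ a = |c| := by
  subst h
  rcases hs with rfl | rfl <;> simp [Int.sign_eq_one_of_pos ha, abs_of_pos ha]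

theorem existsUnique_sign_mul_abs {ι : Type*} {c : ι → ℤ} {Q : ℤ → Prop}
    (hQ : ∀ a, Q a → 0 < a) (hc : ∀ k, Q |c k|) :
    ∃! p : (ι → ℤ) × (ι → ℤ),
      (∀ k, p.1 k = 1 ∨ p.1 k = -1) ∧ (∀ k, Q (p.2 k)) ∧ (fun k => p.2 k * p.1 k) = c := by
  have hc0 : ∀ k, c k ≠ 0 := fun k => abs_pos.1 (hQ _ (hc k))
  refine ⟨(fun k => (c k).sign, fun k => |c k|), ⟨fun k => ?_, hc, ?_⟩, ?_⟩
  · rcases lt_or_gt_of_ne (hc0 k) with h | h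
    exacts [Or.inr (Int.sign_eq_neg_one_of_neg h), Or.inl (Int.sign_eq_one_of_pos h)]
  · exact funext fun k => (mul_comm _ _).trans (Int.sign_mul_abs _)
  · rintro ⟨s, a⟩ ⟨hs, ha, hac⟩
    have h := fun k => Int.eq_sign_and_eq_abs_of_mul_eq (hs k) (hQ _ (ha k)) (congrFun hac k)
    exact Prod.ext (funext fun k => (h k).1) (funext fun k => (h k).2)

lemma Matrix.mulVec_eq_iff_of_mul_eq_one {n R : Type*} [Fintype n] [DecidableEq n] [CommRing R]
    {A B : Matrix n n R} (h : A * B = 1) {c y : n → R} : A *ᵥ c = y ↔ c = B *ᵥ y := by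
  constructor
  · rintro rfl
    rw [mulVec_mulVec, mul_eq_one_comm.1 h, one_mulVec]
  · rintro rfl
    rw [mulVec_mulVec, h, one_mulVec]

theorem forall_eq_sum_mul_midpoint_iff {t : ℕ} (ht : Even t) {D : ℕ → Fin t → ℝ}
    {E : Fin t ≃ Fin t} (hE : ∀ i, ∀ k ≤ t, D k i = if k ≤ E i then D 0 i else -D 0 i)
    (hD0 : ∀ i, D 0 i ≠ 0) {T : Fin t → ℝ} {ε : Fin t → ℤ} (hε : ∀ i, T i = ε i * D 0 i)
    (c : Fin t → ℤ) :
    (∀ i, T i = ∑ k : Fin t, (c k : ℝ) * ((D k i + D (k + 1) i) / 2)) ↔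
      c = altSignMatrix t *ᵥ (ε ∘ E.symm) := by
  have hmid : ∀ i (k : Fin t), (D k i + D (k + 1) i) / 2 = signMatrix t (E i) k * D 0 i :=
    fun i k => midpoint_eq_sign_mul (f := fun m => D m i) (hE i k k.2.le) (hE i (k + 1) k.2)
  have hsum : ∀ i, ∑ k : Fin t, (c k : ℝ) * ((D k i + D (k + 1) i) / 2) =
      ((signMatrix t *ᵥ c) (E i) : ℝ) * D 0 i := fun i => by
    simp only [hmid, mulVec, dotProduct, Int.cast_sum, Int.cast_mul, sum_mul]
    exact sum_congr rfl fun k _ => by ring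
  rw [← mulVec_eq_iff_of_mul_eq_one (signMatrix_mul_altSignMatrix ht), funext_iff,
    ← E.forall_congr_right (q := fun e => (signMatrix t *ᵥ c) e = (ε ∘ E.symm) e)]
  refine forall_congr' fun i => ?_
  rw [hsum, hε, mul_left_inj' (hD0 i), Int.cast_inj, eq_comm]
  simp

theorem stmt_8_general (t : ℕ) (hev : Even t)
    (D : ℕ → Fin t → ℝ)
    (hpm : ∀ k < 2 * t, ∀ i, D k i = 1 ∨ D k i = -1)
    (hadj : ∀ k < 2 * t,
      (Finset.univ.filter fun i => D k i ≠ D ((k + 1) % (2 * t)) i).card = 1)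
    (hsym : ∀ k < t, ∀ i, D (k + t) i = -(D k i))
    (T : Fin t → ℝ) (hT : ∀ i, T i = 1 ∨ T i = -1) :
    -- a unique choice, for each antipodal pair {S^k, S^{k+t}} = {S^k, -S^k},
    -- of a sign ε_k (selecting the member ε_k·S^k of the pair) and of a positive
    -- odd coefficient λ_k with 1 ≤ λ_k ≤ t-1, decomposing T:
    ∃! p : (Fin t → ℤ) × (Fin t → ℤ),
      (∀ k, p.1 k = 1 ∨ p.1 k = -1) ∧
      (∀ k, 1 ≤ p.2 k ∧ p.2 k ≤ (t : ℤ) - 1 ∧ Odd (p.2 k)) ∧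
      (∀ i, T i =
        ∑ k : Fin t, ((p.2 k * p.1 k : ℤ) : ℝ) *
          ((D (k : ℕ) i + D ((k : ℕ) + 1) i) / 2)) := by
  have hD0 : ∀ i, D 0 i = 1 ∨ D 0 i = -1 := fun i => hpm 0 (by have := i.pos; omega) i
  obtain ⟨E, hE⟩ := exists_flipEquiv_of_antipodal_path (D := D)
    (fun k hk i => hpm k (by have := i.pos; omega) i)
    (fun k hk => by simpa [Nat.mod_eq_of_lt (by omega : k + 1 < 2 * t)] using hadj k (by omega))
    (fun i => by simpa using hsym 0 i.pos i)
  choose ε hε using fun i => show ∃ z : ℤ, |z| = 1 ∧ T i = z * D 0 i by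
    rcases hT i with h | h <;> rcases hD0 i with h' | h'
    exacts [⟨1, by simp [h, h']⟩, ⟨-1, by simp [h, h']⟩, ⟨-1, by simp [h, h']⟩,
      ⟨1, by simp [h, h']⟩]
  have hc := odd_and_abs_le_altSignMatrix_mulVec hev (y := ε ∘ E.symm) fun e => (hε _).1
  refine (existsUnique_congr fun p => ?_).1 <| existsUnique_sign_mul_abs
    (Q := fun a => 1 ≤ a ∧ a ≤ (t : ℤ) - 1 ∧ Odd a) (fun a h => h.1)
    fun k => ⟨Int.one_le_abs fun h => by simpa [h] using (hc k).1, (hc k).2, odd_abs.2 (hc k).1⟩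
  rw [forall_eq_sum_mul_midpoint_iff hev hE
    (fun i => by rcases hD0 i with h | h <;> rw [h] <;> norm_num) (fun i => (hε i).2)]

theorem stmt_8 (t : ℕ) (ht : 4 ≤ t) (hev : Even t)
    (D : ℕ → Fin t → ℝ)
    (hpm : ∀ k < 2 * t, ∀ i, D k i = 1 ∨ D k i = -1)
    (hinj : ∀ k < 2 * t, ∀ l < 2 * t, D k = D l → k = l)
    (hadj : ∀ k < 2 * t,
      (Finset.univ.filter fun i => D k i ≠ D ((k + 1) % (2 * t)) i).card = 1)
    (hsym : ∀ k < t, ∀ i, D (k + t) i = -(D k i))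
    (T : Fin t → ℝ) (hT : ∀ i, T i = 1 ∨ T i = -1) :
    -- a unique choice, for each antipodal pair {S^k, S^{k+t}} = {S^k, -S^k},
    -- of a sign ε_k (selecting the member ε_k·S^k of the pair) and of a positive
    -- odd coefficient λ_k with 1 ≤ λ_k ≤ t-1, decomposing T:
    ∃! p : (Fin t → ℤ) × (Fin t → ℤ),
      (∀ k, p.1 k = 1 ∨ p.1 k = -1) ∧
      (∀ k, 1 ≤ p.2 k ∧ p.2 k ≤ (t : ℤ) - 1 ∧ Odd (p.2 k)) ∧
      (∀ i, T i =
        ∑ k : Fin t, ((p.2 k * p.1 k : ℤ) : ℝ) *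
          ((D (k : ℕ) i + D ((k : ℕ) + 1) i) / 2)) :=
  stmt_8_general t hev D hpm hadj hsym T hT
end

section
/- Let t ≥ 4 be even. Define the distinguished symmetric cycle R in the hypercube graph on {1,−1}^t by R^0 := (1,1,…,1), R^s := the vector obtained from R^0 by negating coordinates 1,…,s (for 1 ≤ s ≤ t−1), and R^{k+t} := −R^k (for 0 ≤ k ≤ t−1). Let W(R) be the t×t matrix with rows S^k := (1/2)(R^k + R^{k+1}), 0 ≤ k ≤ t−1, and let P(t) be the matrix with entries (−1)^{i+j} for i ≤ j and (−1)^{i+j+1} for i > j. Then for every j with 1 ≤ j < t, the vector T obtained from (1,…,1) by negating coordinates 1,…,j satisfies T = P(t)^{j+1}·W(R), where P(t)^{j+1} denotes the (j+1)-th row of P(t). -/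
/-- The distinguished symmetric cycle R in the hypercube graph on {1,-1}^t:
    R^0 = (1,…,1); for 1 ≤ s ≤ t-1, R^s is R^0 with the first s coordinates
    negated; and R^{k+t} = -R^k for 0 ≤ k ≤ t-1. -/
def Rcyc (t : ℕ) : ℕ → Fin t → ℝ := fun s i =>
  if s < t then (if (i : ℕ) < s then -1 else 1)
  else (if (i : ℕ) < s - t then 1 else -1)

/-- The subtope matrix W(R), whose rows are S^k = (1/2)(R^k + R^{k+1}). -/
noncomputable def Wmat (t : ℕ) : Matrix (Fin t) (Fin t) ℝ :=
  Matrix.of fun (k : Fin t) (j : Fin t) =>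
    (Rcyc t (k : ℕ) j + Rcyc t ((k : ℕ) + 1) j) / 2

open Finset

theorem sum_neg_one_pow_smul_add_succ {R M : Type*} [Ring R] [AddCommGroup M] [Module R M]
    (v : ℕ → M) (n : ℕ) :
    ∑ k ∈ range n, (-1 : R) ^ k • (v k + v (k + 1)) = v 0 - (-1 : R) ^ n • v n := by
  have hstep (k : ℕ) : (-1 : R) ^ k • (v k + v (k + 1))
      = (-1 : R) ^ k • v k - (-1 : R) ^ (k + 1) • v (k + 1) := by
    rw [pow_succ, mul_neg_one, neg_smul, sub_neg_eq_add, smul_add]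
  simp_rw [hstep]
  simpa using sum_range_sub' (fun k => (-1 : R) ^ k • v k) n

theorem neg_one_pow_sub_of_even {R : Type*} [Ring R] {t j : ℕ} (ht : Even t) (hj : j ≤ t) :
    (-1 : R) ^ (t - j) = (-1) ^ j :=
  neg_one_pow_congr (by simp [Nat.even_sub hj, ht])

theorem sum_Pmat_smul_add_succ {M : Type*} [AddCommGroup M] [Module ℝ M] {t : ℕ}
    (ht : Even t) (j : Fin t) (v : ℕ → M) (hv : v t = -v 0) :
    ∑ k : Fin t, Pmat t j k • (v k + v (k + 1)) = (2 : ℝ) • v j := by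
  obtain ⟨j, hj⟩ := j
  simp only [Pmat, Matrix.of_apply]
  rw [Fin.sum_univ_eq_sum_range (fun k => (if j ≤ k then (-1 : ℝ) ^ (j + k)
    else (-1) ^ (j + k + 1)) • (v k + v (k + 1))), ← Nat.add_sub_cancel' hj.le, sum_range_add]
  have hbefore : ∑ k ∈ range j, (if j ≤ k then (-1 : ℝ) ^ (j + k) else (-1) ^ (j + k + 1)) •
      (v k + v (k + 1)) = (-1 : ℝ) ^ (j + 1) • (v 0 - (-1 : ℝ) ^ j • v j) := by
    rw [← sum_neg_one_pow_smul_add_succ, smul_sum]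
    refine sum_congr rfl fun k hk => ?_
    rw [if_neg (by simpa using hk), smul_smul, ← pow_add]; ring_nf
  have hafter : ∑ k ∈ range (t - j), (if j ≤ j + k then (-1 : ℝ) ^ (j + (j + k))
      else (-1) ^ (j + (j + k) + 1)) • (v (j + k) + v (j + k + 1)) = v j + (-1 : ℝ) ^ j • v 0 := by
    have := sum_neg_one_pow_smul_add_succ (R := ℝ) (fun k => v (j + k)) (t - j)
    simp only [add_zero, Nat.add_sub_cancel' hj.le, hv, neg_one_pow_sub_of_even ht hj.le,
      smul_neg, sub_neg_eq_add, ← add_assoc] at this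
    rw [← this]
    refine sum_congr rfl fun k _ => ?_
    rw [if_pos (Nat.le_add_right j k), ← add_assoc, ← two_mul, pow_add,
      (even_two_mul j).neg_one_pow, one_mul]
  have hsign : (-1 : ℝ) ^ (j + 1) * (-1) ^ j = -1 := by
    rw [← pow_add]; exact Odd.neg_one_pow ⟨j, by ring⟩
  rw [hbefore, hafter, smul_sub, smul_smul, hsign]
  module

theorem Rcyc_of_lt {t s : ℕ} (hs : s < t) :
    Rcyc t s = fun i : Fin t => if (i : ℕ) < s then (-1 : ℝ) else 1 := by
  funext i
  simp [Rcyc, hs]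

theorem Rcyc_self (t : ℕ) : Rcyc t t = -Rcyc t 0 := by
  funext i
  simp [Rcyc, i.pos]

theorem Wmat_row (t : ℕ) (k : Fin t) :
    Wmat t k = (1 / 2 : ℝ) • (Rcyc t k + Rcyc t (k + 1)) := by
  funext i
  simp only [Wmat, Matrix.of_apply, Pi.smul_apply, Pi.add_apply, smul_eq_mul]
  ring

theorem stmt_11_general (t : ℕ) (hev : Even t)
    (j : ℕ) (hjt : j < t) :
    -- _{−[j]}T^{(+)} = P(t)^{j+1} · W(R)   (rows of P(t) are 1-indexed)
    (fun i : Fin t => if (i : ℕ) < j then (-1 : ℝ) else 1) =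
      Matrix.vecMul (fun c => Pmat t ⟨j, hjt⟩ c) (Wmat t) := by
  calc (fun i : Fin t => if (i : ℕ) < j then (-1 : ℝ) else 1)
      = (1 / 2 : ℝ) • (2 : ℝ) • Rcyc t j := by rw [smul_smul, Rcyc_of_lt hjt]; norm_num
    _ = (1 / 2 : ℝ) • ∑ k : Fin t, Pmat t ⟨j, hjt⟩ k • (Rcyc t k + Rcyc t (k + 1)) := by
      rw [sum_Pmat_smul_add_succ hev _ _ (Rcyc_self t)]
    _ = _ := by
      rw [Matrix.vecMul_eq_sum, smul_sum]
      simp_rw [Wmat_row, smul_comm (1 / 2 : ℝ)]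

theorem stmt_11 (t : ℕ) (ht : 4 ≤ t) (hev : Even t)
    (j : ℕ) (hj1 : 1 ≤ j) (hjt : j < t) :
    -- _{−[j]}T^{(+)} = P(t)^{j+1} · W(R)   (rows of P(t) are 1-indexed)
    (fun i : Fin t => if (i : ℕ) < j then (-1 : ℝ) else 1) =
      Matrix.vecMul (fun c => Pmat t ⟨j, hjt⟩ c) (Wmat t) :=
  stmt_11_general t hev j hjt
end

section
/- Let t ≥ 4 be even, let R be the distinguished symmetric cycle on {1,−1}^t (R^0 = (1,…,1), R^s = R^0 with first s coordinates negated, R^{k+t} = −R^k), W(R) its subtope matrix, and P(t) as above. For 1 < i ≤ t, the vector T obtained from (1,…,1) by negating coordinates i, i+1, …, t satisfies T = (−P(t)^i)·W(R), where P(t)^i is the i-th row of P(t). -/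
/-!
Each row `S^k` of `W(R)` is the sign vector `j ↦ sign (j - k)`, so
`(v ⬝ W(R))_c = ∑_{k<c} v_k - ∑_{k>c} v_k` is a combination of partial sums of `v`.
For `v = -P(t)^i` these are alternating geometric sums, and because `(-1)^t = 1` the
combination evaluates to `1` for `c < i - 1` and to `-1` otherwise.
-/

open Finset

lemma Wmat_apply (t : ℕ) (k j : Fin t) : Wmat t k j = ((j : ℤ) - k).sign := by
  rcases k with ⟨k, hk⟩
  rcases j with ⟨j, hj⟩
  simp only [Wmat, Rcyc, Matrix.of_apply]
  rcases lt_trichotomy j k with h | rfl | h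
  · rw [Int.sign_eq_neg_one_of_neg (by simpa using h)]
    split_ifs <;> first | omega | norm_num
  · rw [sub_self, Int.sign_zero]
    split_ifs <;> first | omega | norm_num
  · rw [Int.sign_eq_one_of_pos (by simpa using h)]
    split_ifs <;> first | omega | norm_num

lemma sum_range_mul_sign_sub {R : Type*} [CommRing R] (v : ℕ → R) {c t : ℕ} (hct : c < t) :
    ∑ k ∈ range t, v k * ((c : ℤ) - k).sign =
      ∑ k ∈ range c, v k + ∑ k ∈ range (c + 1), v k - ∑ k ∈ range t, v k := by
  induction t, hct using Nat.le_induction with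
  | base =>
    rw [sum_range_succ, sub_self, Int.sign_zero, Int.cast_zero, mul_zero, add_zero,
      add_sub_cancel_right]
    refine sum_congr rfl fun k hk => ?_
    rw [Int.sign_eq_one_of_pos (by simp at hk; omega), Int.cast_one, mul_one]
  | succ t hct ih =>
    rw [sum_range_succ _ t, ih, sum_range_succ _ t, Int.sign_eq_neg_one_of_neg (by omega)]
    push_cast
    ring

def negPRow (r k : ℕ) : ℝ := (-1) ^ (r + k) * if k < r then 1 else -1

lemma neg_Pmat_apply (t : ℕ) (r : Fin t) (k : Fin t) : -Pmat t r k = negPRow r k := by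
  simp only [Pmat, Matrix.of_apply, negPRow]
  split_ifs <;> first | omega | ring

lemma two_mul_sum_range_negPRow (r m : ℕ) :
    2 * ∑ k ∈ range m, negPRow r k = (-1) ^ r * (1 + (-1) ^ m - 2 * (-1) ^ min m r) := by
  induction m with
  | zero => norm_num
  | succ m ih =>
    rw [sum_range_succ, mul_add, ih, negPRow]
    rcases lt_or_ge m r with h | h
    · rw [if_pos h, min_eq_left h.le, min_eq_left h]
      ring
    · rw [if_neg h.not_gt, min_eq_right h, min_eq_right (by omega)]
      ring

theorem stmt_13 (t : ℕ) (ht : 4 ≤ t) (hev : Even t)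
    (i : ℕ) (hit : i ≤ t) :
    -- _{−[i,t]}T^{(+)} = (−P(t)^i) · W(R)   (coordinates are 1-indexed: the
    -- coordinate of index c (0-indexed) is negated iff i ≤ c+1)
    (fun c : Fin t => if i ≤ (c : ℕ) + 1 then (-1 : ℝ) else 1) =
      Matrix.vecMul (fun c => -(Pmat t ⟨i - 1, by omega⟩ c)) (Wmat t) := by
  funext c
  simp only [Matrix.vecMul, dotProduct, neg_Pmat_apply, Wmat_apply]
  rw [Fin.sum_univ_eq_sum_range (fun k => negPRow (i - 1) k * ((c : ℤ) - k).sign) t,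
    sum_range_mul_sign_sub _ c.isLt]
  refine mul_left_cancel₀ (two_ne_zero : (2 : ℝ) ≠ 0) ?_
  have hsq : ((-1 : ℝ) ^ (i - 1)) ^ 2 = 1 := by rw [← pow_mul, mul_comm, pow_mul]; norm_num
  rw [mul_sub, mul_add, two_mul_sum_range_negPRow, two_mul_sum_range_negPRow,
    two_mul_sum_range_negPRow, hev.neg_one_pow, min_eq_right (by omega : i - 1 ≤ t)]
  rcases lt_or_ge (c : ℕ) (i - 1) with hc | hc
  · rw [if_neg (by omega), min_eq_left hc.le, min_eq_left hc, pow_succ]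
    linear_combination -2 * hsq
  · rw [if_pos (by omega), min_eq_right hc, min_eq_right (by omega)]
    linear_combination 2 * hsq
end
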